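/- Let G be a finitely generated group and N a finitely generated normal subgroup of G such that N admits a nonempty weakly aperiodic N-SFT and the quotient G/N contains an element of infinite order. Then G is not periodically rigid: there exists a nonempty weakly aperiodic G-SFT that is not strongly aperiodic. -/
import Mathlib


section SymbolicDynamics

variable {G : Type} [Group G] {A : Type}

/-- The left shift action of `G` on configurations `G → A`: `(g · x) h = x (g⁻¹ h)`. -/
def shiftAct (g : G) (x : G → A) : G → A := fun h => x (g⁻¹ * h)

/-- A pattern: a finite support together with a map assigning letters. -/
abbrev Pattern (G A : Type) := Finset G × (G → A)

/-- A pattern `p` appears in a configuration `x` if some translate of `x` agrees with `p`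
on its support. -/
def Appears (p : Pattern G A) (x : G → A) : Prop :=
  ∃ g : G, ∀ h ∈ p.1, x (g * h) = p.2 h

/-- The set of configurations avoiding every pattern in `𝓕`. -/
def shiftSpace (𝓕 : Set (Pattern G A)) : Set (G → A) :=
  {x | ∀ p ∈ 𝓕, ¬ Appears p x}

/-- A subshift: a set of configurations defined by a set of forbidden patterns. -/
def IsSubshift (X : Set (G → A)) : Prop :=
  ∃ 𝓕 : Set (Pattern G A), X = shiftSpace 𝓕

/-- A subshift of finite type: defined by a finite set of forbidden patterns. -/
def IsSFT (X : Set (G → A)) : Prop :=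
  ∃ 𝓕 : Set (Pattern G A), 𝓕.Finite ∧ X = shiftSpace 𝓕

/-- The stabilizer of a configuration under the shift action. -/
def stab (x : G → A) : Subgroup G where
  carrier := {g | shiftAct g x = x}
  one_mem' := by
    show shiftAct 1 x = x
    funext h; simp [shiftAct]
  mul_mem' := by
    intro a b ha hb
    have ha' : shiftAct a x = x := ha
    have hb' : shiftAct b x = x := hb
    show shiftAct (a * b) x = x
    funext h
    have h1 := congrFun hb' (a⁻¹ * h)
    have h2 := congrFun ha' h
    simp only [shiftAct] at h1 h2 ⊢
    rw [show (a * b)⁻¹ * h = b⁻¹ * (a⁻¹ * h) by rw [mul_inv_rev, mul_assoc], h1, h2]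
  inv_mem' := by
    intro a ha
    have ha' : shiftAct a x = x := ha
    show shiftAct a⁻¹ x = x
    funext h
    have h1 := congrFun ha' (a * h)
    simp only [shiftAct] at h1 ⊢
    simp only [inv_inv]
    rw [← h1, inv_mul_cancel_left]

/-- The orbit of a configuration under the shift action. -/
def orbitSet (x : G → A) : Set (G → A) := Set.range fun g => shiftAct g x

/-- A subshift is weakly aperiodic if every configuration has an infinite orbit. -/
def WeaklyAperiodic (X : Set (G → A)) : Prop := ∀ x ∈ X, (orbitSet x).Infinite

/-- A subshift is strongly aperiodic if every configuration has trivial stabilizer. -/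
def StronglyAperiodic (X : Set (G → A)) : Prop := ∀ x ∈ X, stab x = ⊥

/-- A family of subgroups of `G` is realizable if it is the set of stabilizers of a
nonempty `G`-SFT over some nonempty finite alphabet. -/
def Realizable (𝒢 : Set (Subgroup G)) : Prop :=
  ∃ (A : Type) (_ : Finite A) (_ : Nonempty A) (X : Set (G → A)),
    IsSFT X ∧ X.Nonempty ∧ stab '' X = 𝒢

end SymbolicDynamics

/-- A group is periodically rigid if every nonempty weakly aperiodic SFT on it is
strongly aperiodic. -/
def PeriodicallyRigid (G : Type) [Group G] : Prop :=
  ∀ (A : Type) (_ : Finite A) (_ : Nonempty A) (X : Set (G → A)),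
    IsSFT X → X.Nonempty → WeaklyAperiodic X → StronglyAperiodic X

/-- A group is virtually `ℤ` if it has a finite-index subgroup isomorphic to `ℤ`. -/
def VirtuallyZ (G : Type) [Group G] : Prop :=
  ∃ H : Subgroup G, H.FiniteIndex ∧ Nonempty (H ≃* Multiplicative ℤ)

/-- A group is virtually `ℤ²` if it has a finite-index subgroup isomorphic to `ℤ²`. -/
def VirtuallyZ2 (G : Type) [Group G] : Prop :=
  ∃ H : Subgroup G, H.FiniteIndex ∧ Nonempty (H ≃* Multiplicative (ℤ × ℤ))



section Aux

variable {G : Type} [Group G] {A : Type}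

lemma shiftAct_mem_shiftSpace (𝓕 : Set (Pattern G A)) {x : G → A}
    (hx : x ∈ shiftSpace 𝓕) (g : G) : shiftAct g x ∈ shiftSpace 𝓕 := by
  rintro p hp ⟨g', hg'⟩
  refine hx p hp ⟨g⁻¹ * g', fun h hh => ?_⟩
  rw [mul_assoc]
  exact hg' h hh

lemma exists_zdec {Q : Type} [Group Q] {κ : Q} (hκ : ¬ IsOfFinOrder κ) :
    ∃ (ρ : Q → Q) (m : Q → ℤ),
      (∀ q, q = κ ^ (m q) * ρ q) ∧ (∀ q, ρ (κ * q) = ρ q) ∧ (∀ q, m (κ * q) = m q + 1) := by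
  classical
  let s : Setoid Q := ⟨fun a b => ∃ j : ℤ, a = κ ^ j * b,
    ⟨fun a => ⟨0, by simp⟩,
     fun {a b} h => by
       obtain ⟨j, hj⟩ := h
       exact ⟨-j, by rw [hj, ← mul_assoc, ← zpow_add, neg_add_cancel, zpow_zero, one_mul]⟩,
     fun {a b c} h1 h2 => by
       obtain ⟨j, hj⟩ := h1; obtain ⟨i, hi⟩ := h2
       exact ⟨j + i, by rw [hj, hi, ← mul_assoc, ← zpow_add]⟩⟩⟩
  let ρ : Q → Q := fun q => (Quotient.mk s q).out
  have hrel : ∀ q, ∃ j : ℤ, q = κ ^ j * ρ q := by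
    intro q
    obtain ⟨j, hj⟩ : ∃ j : ℤ, ρ q = κ ^ j * q := Quotient.exact (Quotient.out_eq (Quotient.mk s q))
    exact ⟨-j, by rw [hj, ← mul_assoc, ← zpow_add, neg_add_cancel, zpow_zero, one_mul]⟩
  let m : Q → ℤ := fun q => (hrel q).choose
  have hm : ∀ q, q = κ ^ (m q) * ρ q := fun q => (hrel q).choose_spec
  have hρ : ∀ q, ρ (κ * q) = ρ q := by
    intro q
    have : Quotient.mk s (κ * q) = Quotient.mk s q := Quotient.sound ⟨1, by rw [zpow_one]⟩
    simp only [ρ, this]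
  refine ⟨ρ, m, hm, hρ, ?_⟩
  intro q
  have h1 : κ * q = κ ^ (m (κ * q)) * ρ q := by rw [← hρ q]; exact hm (κ * q)
  have h2 : κ * q = κ ^ (m q + 1) * ρ q := by
    rw [zpow_add, zpow_one]
    calc κ * q = κ * (κ ^ (m q) * ρ q) := by rw [← hm q]
    _ = κ ^ (m q) * κ * ρ q := by group
  have h3 : κ ^ (m (κ * q)) = κ ^ (m q + 1) := mul_right_cancel (h1.symm.trans h2)
  exact injective_zpow_iff_not_isOfFinOrder.mpr hκ h3

end Aux

/-- If `N` is a finitely generated normal subgroup of a finitely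
generated group `G` admitting a nonempty weakly aperiodic `N`-SFT, and `G/N` contains an
element of infinite order, then `G` is not periodically rigid. -/
theorem statement17 {G : Type} [Group G] [Group.FG G] (N : Subgroup G) [N.Normal]
    (hNfg : N.FG)
    (hwa : ∃ (A : Type) (_ : Finite A) (_ : Nonempty A) (X : Set (N → A)),
        IsSFT X ∧ X.Nonempty ∧ WeaklyAperiodic X)
    (hord : ∃ k : G ⧸ N, ¬ IsOfFinOrder k) :
    ∃ (A : Type) (_ : Finite A) (_ : Nonempty A) (X : Set (G → A)),
      IsSFT X ∧ X.Nonempty ∧ WeaklyAperiodic X ∧ ¬ StronglyAperiodic X := by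
  classical
  obtain ⟨A, hAfin, hAne, X, ⟨𝓕, h𝓕fin, hXeq⟩, ⟨x, hxX⟩, hXwa⟩ := hwa
  obtain ⟨k, hk⟩ := hord
  obtain ⟨ρ, m, hdec, hρ, hmk⟩ := exists_zdec hk
  obtain ⟨k0, hk0⟩ := QuotientGroup.mk_surjective k
  -- the projection
  set π : G → G ⧸ N := QuotientGroup.mk with hπdef
  have hπzpow : ∀ (j : ℤ), π (k0 ^ j) = k ^ j := by
    intro j
    rw [← hk0]
    exact map_zpow (QuotientGroup.mk' N) k0 j
  have hπmul : ∀ a b : G, π (a * b) = π a * π b := fun a b => rfl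
  -- the "transversal" function
  set w : G → G := fun g => k0 ^ (m (π g)) * (ρ (π g)).out with hwdef
  have hπw : ∀ g, π (w g) = π g := by
    intro g
    have : π (w g) = k ^ (m (π g)) * ρ (π g) := by
      rw [hwdef]
      show π (k0 ^ m (π g) * Quotient.out (ρ (π g))) = _
      rw [hπmul, hπzpow]
      exact congrArg (k ^ m (π g) * ·) (QuotientGroup.out_eq' (ρ (π g)))
    rw [this, ← hdec (π g)]
  have hmem : ∀ g, (w g)⁻¹ * g ∈ N := by
    intro g
    exact QuotientGroup.eq.mp (hπw g)
  set n0 : G → N := fun g => ⟨(w g)⁻¹ * g, hmem g⟩ with hn0def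
  set y : G → A := fun g => x (n0 g) with hydef
  -- coset invariance of w
  have hwcoset : ∀ (g : G) (ν : N), w (g * ν) = w g := by
    intro g ν
    have : π (g * ν) = π g := by
      symm
      exact QuotientGroup.eq.mpr (by rw [← mul_assoc, inv_mul_cancel, one_mul]; exact ν.2)
    rw [hwdef]; simp only [this]
  have hn0coset : ∀ (g : G) (ν : N), n0 (g * ν) = n0 g * ν := by
    intro g ν
    apply Subtype.ext
    show (w (g * ↑ν))⁻¹ * (g * ↑ν) = ((w g)⁻¹ * g) * ↑ν
    rw [hwcoset g ν, mul_assoc]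
  -- k0-invariance of n0
  have hwk : ∀ g, w (k0 * g) = k0 * w g := by
    intro g
    have h1 : π (k0 * g) = k * π g := by rw [hπmul, hk0]
    rw [hwdef]
    simp only [h1, hmk, hρ]
    rw [show m (π g) + 1 = 1 + m (π g) from add_comm _ _, zpow_one_add, mul_assoc]
  have hyk : ∀ g, y (k0 * g) = y g := by
    intro g
    have : n0 (k0 * g) = n0 g := by
      apply Subtype.ext
      show (w (k0 * g))⁻¹ * (k0 * g) = (w g)⁻¹ * g
      rw [hwk g, mul_inv_rev, mul_assoc, ← mul_assoc k0⁻¹, inv_mul_cancel, one_mul]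
    rw [hydef]; simp only [this]
  -- the pushed-forward forbidden patterns
  set emb : N ↪ G := ⟨Subtype.val, Subtype.val_injective⟩ with hembdef
  set Φ : Pattern N A → Pattern G A :=
    fun p => (p.1.map emb, fun g => if h : g ∈ N then p.2 ⟨g, h⟩ else p.2 1) with hΦdef
  have hΦval : ∀ (p : Pattern N A) (h : N), (Φ p).2 ↑h = p.2 h := by
    intro p h
    show (if hh : (h : G) ∈ N then p.2 ⟨↑h, hh⟩ else p.2 1) = p.2 h
    rw [dif_pos h.2]
  set 𝓕G : Set (Pattern G A) := Φ '' 𝓕 with h𝓕Gdef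
  set Y : Set (G → A) := shiftSpace 𝓕G with hYdef
  -- membership criterion
  have hYmem : ∀ z : G → A, z ∈ Y ↔ ∀ g : G, (fun ν : N => z (g * ν)) ∈ shiftSpace 𝓕 := by
    intro z
    constructor
    · rintro hz g p hp ⟨ν0, hν0⟩
      refine hz (Φ p) ⟨p, hp, rfl⟩ ⟨g * ↑ν0, ?_⟩
      intro h' hh'
      obtain ⟨h, hh, rfl⟩ := Finset.mem_map.mp hh'
      have h1 := hν0 h hh
      have h2 : z (g * ↑(ν0 * h)) = p.2 h := h1
      show z (g * ↑ν0 * emb h) = (Φ p).2 (emb h)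
      have hcoe : ((ν0 * h : N) : G) = ↑ν0 * ↑h := rfl
      rw [show (emb h : G) = ↑h from rfl, hΦval p h, mul_assoc, ← hcoe]
      exact h2
    · rintro hz p' ⟨p, hp, rfl⟩ ⟨g, hg⟩
      refine hz g p hp ⟨1, ?_⟩
      intro h hh
      have h1 := hg (emb h) (Finset.mem_map_of_mem emb hh)
      show z (g * ↑(1 * h)) = p.2 h
      rw [one_mul]
      rw [show (emb h : G) = ↑h from rfl] at h1
      rw [h1, hΦval p h]
  -- y belongs to Y
  have hyY : y ∈ Y := by
    rw [hYmem]
    intro g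
    have heq : (fun ν : N => y (g * ν)) = shiftAct (n0 g)⁻¹ x := by
      funext ν
      show y (g * ν) = x ((n0 g)⁻¹⁻¹ * ν)
      rw [inv_inv, hydef]
      simp only [hn0coset g ν]
    rw [heq]
    exact shiftAct_mem_shiftSpace 𝓕 (hXeq ▸ hxX) _
  refine ⟨A, hAfin, hAne, Y, ⟨𝓕G, h𝓕fin.image Φ, rfl⟩, ⟨y, hyY⟩, ?_, ?_⟩
  · -- weakly aperiodic
    intro z hz
    set Rz : N → A := fun ν => z ↑ν with hRzdef
    have hRzX : Rz ∈ shiftSpace 𝓕 := by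
      have := (hYmem z).mp hz 1
      have heq : (fun ν : N => z ((1 : G) * ν)) = Rz := by funext ν; rw [one_mul]
      rwa [heq] at this
    have hsub : orbitSet Rz ⊆ (fun w : G → A => fun ν : N => w ↑ν) '' orbitSet z := by
      rintro _ ⟨ν, rfl⟩
      refine ⟨shiftAct (↑ν : G) z, ⟨↑ν, rfl⟩, ?_⟩
      funext h
      show z ((↑ν)⁻¹ * ↑h) = Rz (ν⁻¹ * h)
      rfl
    have hinf : ((fun w : G → A => fun ν : N => w ↑ν) '' orbitSet z).Infinite :=
      Set.Infinite.mono hsub (hXwa Rz (hXeq ▸ hRzX))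
    exact Set.Infinite.of_image _ hinf
  · -- not strongly aperiodic
    intro hSA
    have hk0stab : k0 ∈ stab y := by
      show shiftAct k0 y = y
      funext h
      show y (k0⁻¹ * h) = y h
      have := hyk (k0⁻¹ * h)
      rw [← mul_assoc, mul_inv_cancel, one_mul] at this
      exact this.symm
    rw [hSA y hyY, Subgroup.mem_bot] at hk0stab
    apply hk
    rw [← hk0, hk0stab]
    exact IsOfFinOrder.one
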